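/- arXiv:2403.05598 — 2 statements merged into one kernel-verified Lean document; each statement's English description precedes it below -/
import Mathlib

section
/- For all reals A < B, Φ(B) − Φ(A) + A·φ(A) − B·φ(B) + φ(A)²/Φ(A) + φ(B)²/(1 − Φ(B)) ≤ 1. (This states that the Fisher information of the rectified Gaussian N^R(θ, 1, [a,b]) in its location parameter θ, which equals the left-hand side with A = a−θ and B = b−θ, is at most the Fisher information 1 of the Gaussian N(θ,1); by the scaling θ ↦ θ/σ this yields the bound η^B ≤ η = 1/σ for every noise scale σ.) -/
open MeasureTheory Real Filter

/-- Standard Gaussian density. -/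
noncomputable def phi (x : ℝ) : ℝ := (Real.sqrt (2 * Real.pi))⁻¹ * Real.exp (-(x ^ 2) / 2)

/-- Standard Gaussian cumulative distribution function. -/
noncomputable def Phi (x : ℝ) : ℝ := ∫ t in Set.Iic x, phi t

/-!
Each atom of the rectified Gaussian carries at most the Gaussian second moment of its tail.
On `(-∞, A]` the first moment is `∫ t φ = -φ(A)` and the second is `∫ t² φ = Φ(A) - A φ(A)`
(integration by parts, using `φ' = -t φ`), so Cauchy–Schwarz gives
`φ(A)² / Φ(A) ≤ Φ(A) - A φ(A)`; the upper tail is the mirror image under `t ↦ -t`.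
The continuous part is `∫_A^B t² φ`, so with the two tail bounds the total is at most
`∫ t² φ = 1`.
-/

open Set ProbabilityTheory

theorem sq_integral_mul_le_integral_mul_integral_sq_mul {α : Type*} [MeasurableSpace α]
    {μ : Measure α} {f w : α → ℝ} (hw : 0 ≤ᵐ[μ] w) (hw_int : Integrable w μ)
    (hfw : Integrable (fun x => f x * w x) μ) (hf2w : Integrable (fun x => f x ^ 2 * w x) μ) :
    (∫ x, f x * w x ∂μ) ^ 2 ≤ (∫ x, w x ∂μ) * ∫ x, f x ^ 2 * w x ∂μ := by
  have hquad : ∀ c : ℝ, 0 ≤ (∫ x, w x ∂μ) * (c * c) + (-2 * ∫ x, f x * w x ∂μ) * c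
      + ∫ x, f x ^ 2 * w x ∂μ := fun c => calc
    0 ≤ ∫ x, (c - f x) ^ 2 * w x ∂μ :=
      integral_nonneg_of_ae (hw.mono fun x hx => mul_nonneg (sq_nonneg _) hx)
    _ = ∫ x, (c ^ 2 * w x - 2 * c * (f x * w x) + f x ^ 2 * w x) ∂μ :=
      integral_congr_ae (ae_of_all _ fun x => by ring)
    _ = _ := by
      rw [integral_add ?_ hf2w, integral_sub (hw_int.const_mul _) (hfw.const_mul _),
        integral_const_mul, integral_const_mul]
      · ring
      · exact (hw_int.const_mul _).sub (hfw.const_mul _)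
  have := discrim_le_zero hquad
  rw [discrim] at this
  linarith

theorem integral_Iic_of_hasDerivAt_of_integrableOn {f f' : ℝ → ℝ} {a : ℝ}
    (hderiv : ∀ x ∈ Iic a, HasDerivAt f (f' x) x) (f'int : IntegrableOn f' (Iic a))
    (fint : IntegrableOn f (Iic a)) : ∫ x in Iic a, f' x = f a := by
  rw [integral_Iic_of_hasDerivAt_of_tendsto' hderiv f'int
    (tendsto_zero_of_hasDerivAt_of_integrableOn_Iic hderiv f'int fint), sub_zero]

lemma phi_eq_gaussianPDFReal : phi = gaussianPDFReal 0 1 := by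
  ext x
  simp [phi, gaussianPDFReal]

lemma phi_pos (x : ℝ) : 0 < phi x := by
  rw [phi_eq_gaussianPDFReal]
  exact gaussianPDFReal_pos _ _ _ one_ne_zero

lemma phi_neg (x : ℝ) : phi (-x) = phi x := by
  simp [phi]

lemma integrable_pow_mul_phi (n : ℕ) : Integrable fun x => x ^ n * phi x := by
  have h := (integrable_rpow_mul_exp_neg_mul_sq (by norm_num : (0 : ℝ) < 1 / 2)
    (by linarith [n.cast_nonneg (α := ℝ)] : (-1 : ℝ) < n)).const_mul (√(2 * π))⁻¹
  refine h.congr (ae_of_all _ fun x => ?_)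
  simp only [rpow_natCast, phi]
  ring_nf

lemma integrable_mul_phi : Integrable fun x => x * phi x := by
  simpa using integrable_pow_mul_phi 1

lemma integrable_phi : Integrable phi := by
  simpa using integrable_pow_mul_phi 0

lemma hasDerivAt_phi (x : ℝ) : HasDerivAt phi (-(x * phi x)) x := by
  have h := (((hasDerivAt_pow 2 x).fun_neg.div_const 2).exp).const_mul (√(2 * π))⁻¹
  refine HasDerivAt.congr_deriv (f := phi) h ?_
  simp only [phi]
  ring

lemma hasDerivAt_neg_mul_phi (x : ℝ) :
    HasDerivAt (fun t => -(t * phi t)) ((x ^ 2 - 1) * phi x) x := by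
  refine (((hasDerivAt_id' x).fun_mul (hasDerivAt_phi x)).fun_neg).congr_deriv ?_
  ring

lemma integral_Iic_mul_phi (A : ℝ) : ∫ t in Iic A, t * phi t = -phi A := by
  rw [← neg_eq_iff_eq_neg, ← integral_neg]
  exact integral_Iic_of_hasDerivAt_of_integrableOn (fun x _ => hasDerivAt_phi x)
    integrable_mul_phi.neg.integrableOn integrable_phi.integrableOn

lemma integral_Iic_sq_mul_phi (A : ℝ) : ∫ t in Iic A, t ^ 2 * phi t = Phi A - A * phi A := by
  have hint : Integrable fun t => (t ^ 2 - 1) * phi t := by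
    refine ((integrable_pow_mul_phi 2).sub integrable_phi).congr (ae_of_all _ fun t => ?_)
    simp only [Pi.sub_apply]
    ring
  have h := integral_Iic_of_hasDerivAt_of_integrableOn (a := A)
    (fun x _ => hasDerivAt_neg_mul_phi x)
    hint.integrableOn integrable_mul_phi.neg.integrableOn
  simp only [sub_mul, one_mul] at h
  rw [integral_sub (integrable_pow_mul_phi 2).integrableOn integrable_phi.integrableOn] at h
  rw [Phi]
  linarith

lemma Phi_pos (x : ℝ) : 0 < Phi x := by
  rw [Phi, setIntegral_pos_iff_support_of_nonneg_ae (ae_of_all _ fun t => (phi_pos t).le)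
    integrable_phi.integrableOn, Function.support_eq_univ fun t => (phi_pos t).ne', univ_inter]
  simp

lemma Phi_neg (x : ℝ) : Phi (-x) = 1 - Phi x := by
  have htotal : Phi x + ∫ t in Ioi x, phi t = 1 := by
    rw [Phi, intervalIntegral.integral_Iic_add_Ioi integrable_phi.integrableOn
      integrable_phi.integrableOn, phi_eq_gaussianPDFReal,
      integral_gaussianPDFReal_eq_one _ one_ne_zero]
  rw [Phi, ← integral_comp_neg_Ioi]
  simp only [phi_neg]
  linarith

lemma sq_phi_div_Phi_le (A : ℝ) : phi A ^ 2 / Phi A ≤ Phi A - A * phi A := by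
  have hcs := sq_integral_mul_le_integral_mul_integral_sq_mul (μ := volume.restrict (Iic A))
    (f := id) (ae_of_all _ fun t => (phi_pos t).le) integrable_phi.integrableOn
    integrable_mul_phi.integrableOn (integrable_pow_mul_phi 2).integrableOn
  simp only [id, integral_Iic_mul_phi, integral_Iic_sq_mul_phi, neg_sq] at hcs
  rw [div_le_iff₀ (Phi_pos A), mul_comm]
  exact hcs

theorem rectified_gaussian_fisher_info_le_one_general (A B : ℝ) :
    Phi B - Phi A + A * phi A - B * phi B +
        phi A ^ 2 / Phi A + phi B ^ 2 / (1 - Phi B) ≤ 1 := by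
  have hlower := sq_phi_div_Phi_le A
  have hupper := sq_phi_div_Phi_le (-B)
  rw [phi_neg, Phi_neg] at hupper
  linarith

/-- The Fisher information of the rectified Gaussian `N^R(θ, 1, [a,b])` in its
location parameter (with `A = a - θ`, `B = b - θ`) is at most `1`, the Fisher
information of the Gaussian `N(θ, 1)`. -/
theorem rectified_gaussian_fisher_info_le_one (A B : ℝ) (hAB : A < B) :
    Phi B - Phi A + A * phi A - B * phi B +
        phi A ^ 2 / Phi A + phi B ^ 2 / (1 - Phi B) ≤ 1 :=
  rectified_gaussian_fisher_info_le_one_general A B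
end

section
/- Let f : ℝ → ℝ be three times differentiable with continuous derivatives, satisfying: f(0) = 0, f'(0) = 0, f''(0) > 0, the limit lim_{x→∞} f(x) exists and is ≥ 0, and there exists X₀ > 0 such that f'(x) < 0 for all x ≥ X₀. Suppose moreover there are functions r, t : ℝ → ℝ with f'(x) = r(x)·t(x) for all x > 0, where r(x) > 0 for all x > 0 and t is strictly concave on (0, ∞). Then f(x) ≥ 0 for all x > 0. -/
open MeasureTheory Real Filter
open Set

/-- Auxiliary sign lemma: if `f` is thrice continuously differentiable with
`f(0) = 0`, `f'(0) = 0`, `f''(0) > 0`, limit at `+∞` existing and nonnegative,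
`f'` eventually negative, and `f' = r · t` on `(0, ∞)` with `r > 0` and `t`
strictly concave on `(0, ∞)`, then `f ≥ 0` on `(0, ∞)`. -/
theorem sign_lemma (f r t : ℝ → ℝ) (hf : ContDiff ℝ 3 f)
    (h0 : f 0 = 0) (h1 : deriv f 0 = 0) (h2 : 0 < iteratedDeriv 2 f 0)
    (hlim : ∃ L : ℝ, 0 ≤ L ∧ Tendsto f atTop (nhds L))
    (hneg : ∃ X₀ : ℝ, 0 < X₀ ∧ ∀ x ≥ X₀, deriv f x < 0)
    (hrt : ∀ x > 0, deriv f x = r x * t x)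
    (hr : ∀ x > 0, 0 < r x)
    (ht : StrictConcaveOn ℝ (Set.Ioi 0) t) :
    ∀ x > 0, 0 ≤ f x := by
  obtain ⟨L, hL0, hL⟩ := hlim
  obtain ⟨X₀, hX₀, hX⟩ := hneg
  have hfd : Differentiable ℝ f := hf.differentiable (by norm_num)
  have hfd1 : Differentiable ℝ (deriv f) := by
    have h1 : ContDiff ℝ 2 (deriv f) := (contDiff_succ_iff_deriv.mp (by norm_num at hf ⊢; exact hf : ContDiff ℝ (2+1) f)).2.2
    exact h1.differentiable (by norm_num)
  -- derivative of deriv f at 0 is positive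
  have hD : HasDerivAt (deriv f) (deriv (deriv f) 0) 0 := (hfd1 0).hasDerivAt
  have h2' : 0 < deriv (deriv f) 0 := by
    have : iteratedDeriv 2 f 0 = deriv (deriv f) 0 := by
      rw [iteratedDeriv_succ, iteratedDeriv_one]
    linarith [h2, this ▸ h2]
  -- deriv f > 0 eventually on the right of 0
  have hslope : Tendsto (slope (deriv f) 0) (nhdsWithin 0 {(0:ℝ)}ᶜ) (nhds (deriv (deriv f) 0)) :=
    hasDerivAt_iff_tendsto_slope.mp hD
  have hev : ∀ᶠ x in nhdsWithin (0:ℝ) (Ioi 0), 0 < deriv f x := by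
    have h1' : ∀ᶠ x in nhdsWithin (0:ℝ) {(0:ℝ)}ᶜ, 0 < slope (deriv f) 0 x :=
      hslope.eventually (eventually_gt_nhds h2')
    have h2'' : ∀ᶠ x in nhdsWithin (0:ℝ) (Ioi 0), 0 < slope (deriv f) 0 x :=
      h1'.filter_mono (nhdsWithin_mono 0 (fun x hx => ne_of_gt hx))
    filter_upwards [h2'', self_mem_nhdsWithin] with x hx hx0
    have : slope (deriv f) 0 x = deriv f x / x := by
      simp [slope, h1, div_eq_inv_mul]
    rw [this] at hx
    exact (div_pos_iff.mp hx).resolve_right (fun h => absurd h.2 (not_lt.mpr hx0.le)) |>.1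
  -- the set S
  set S : Set ℝ := {x ∈ Ioi (0:ℝ) | 0 < t x} with hS
  have hconv : Convex ℝ S := ht.concaveOn.convex_gt 0
  have hmemS : ∀ y > (0:ℝ), ∃ s ∈ S, s < y := by
    intro y hy
    have : ∀ᶠ x in nhdsWithin (0:ℝ) (Ioi 0), x ∈ S ∧ x < y := by
      filter_upwards [hev, self_mem_nhdsWithin,
        Ioo_mem_nhdsGT_of_mem (by constructor <;> simp [hy] : (0:ℝ) ∈ Ico 0 y)] with x hx hx0 hxy
      refine ⟨⟨hx0, ?_⟩, hxy.2⟩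
      have hd := hrt x hx0
      have hrx := hr x hx0
      by_contra h
      push_neg at h
      nlinarith
    obtain ⟨s, hs⟩ := this.exists
    exact ⟨s, hs.1, hs.2⟩
  have hSne : S.Nonempty := by obtain ⟨s, hs, _⟩ := hmemS 1 one_pos; exact ⟨s, hs⟩
  have hSbdd : BddAbove S := by
    refine ⟨X₀, fun x hx => ?_⟩
    by_contra h
    push_neg at h
    have := hX x h.le
    have := hrt x hx.1
    nlinarith [hr x hx.1, hx.2]
  set b := sSup S with hb
  have hb0 : 0 < b := by
    obtain ⟨s, hsS⟩ := hSne
    exact lt_of_lt_of_le hsS.1 (le_csSup hSbdd hsS)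
  have htpos : ∀ y, 0 < y → y < b → 0 < t y := by
    intro y hy hyb
    obtain ⟨s, hsS, hys⟩ := exists_lt_of_lt_csSup hSne hyb
    obtain ⟨s', hs'S, hs'y⟩ := hmemS y hy
    have : y ∈ S := hconv.ordConnected.out hs'S hsS ⟨hs'y.le, hys.le⟩
    exact this.2
  have htnonpos : ∀ y, b < y → t y ≤ 0 := by
    intro y hyb
    by_contra h
    push_neg at h
    have : y ∈ S := ⟨lt_trans hb0 hyb, h⟩
    exact absurd (le_csSup hSbdd this) (not_le.mpr hyb)
  -- antitone on [b, ∞)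
  have hanti : AntitoneOn f (Ici b) := by
    apply antitoneOn_of_deriv_nonpos (convex_Ici b) hfd.continuous.continuousOn
      (hfd.differentiableOn)
    intro y hy
    rw [interior_Ici] at hy
    have hy0 : 0 < y := lt_trans hb0 hy
    rw [hrt y hy0]
    exact mul_nonpos_of_nonneg_of_nonpos (hr y hy0).le (htnonpos y hy)
  intro x hx
  rcases le_or_gt x b with hxb | hxb
  · -- monotone on [0, x]
    have hmono : MonotoneOn f (Icc 0 x) := by
      apply monotoneOn_of_deriv_nonneg (convex_Icc 0 x) hfd.continuous.continuousOn
        hfd.differentiableOn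
      intro y hy
      rw [interior_Icc] at hy
      have hy0 := hy.1
      rw [hrt y hy0]
      exact (mul_pos (hr y hy0) (htpos y hy0 (lt_of_lt_of_le hy.2 hxb))).le
    have := hmono (Set.left_mem_Icc.mpr hx.le) (Set.right_mem_Icc.mpr hx.le) hx.le
    linarith [h0 ▸ this]
  · -- x > b : f x ≥ L ≥ 0
    have : L ≤ f x := by
      apply le_of_tendsto hL
      filter_upwards [eventually_ge_atTop x] with y hy
      exact hanti hxb.le (le_trans hxb.le hy) hy
    linarith
end
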